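/- Let H_0 ∈ ℝ^{N×T×F} be a third-order tensor and B1 ∈ ℝ^{N×N}, B2 ∈ ℝ^{T×T}, B3 ∈ ℝ^{F×F} square matrices. Suppose H : ℝ → ℝ^{N×T×F} is differentiable and satisfies dH(t)/dt = H(t) ×_1 B1 + H(t) ×_2 B2 + H(t) ×_3 B3 + H_0 for all t. Then the integrating-factor transform H*(t) = H(t) ×_1 exp(−tB1) ×_2 exp(−tB2) ×_3 exp(−tB3) is differentiable with derivative dH*(t)/dt = H_0 ×_1 exp(−tB1) ×_2 exp(−tB2) ×_3 exp(−tB3). -/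

import Mathlib

open scoped BigOperators
open Matrix

noncomputable section

/-- Mode-1 product of a third-order tensor with a matrix. -/
def tmul1 {n1 n2 n3 m : ℕ} (T : Fin n1 → Fin n2 → Fin n3 → ℝ)
    (M : Matrix (Fin n1) (Fin m) ℝ) : Fin m → Fin n2 → Fin n3 → ℝ :=
  fun l j k => ∑ i, T i j k * M i l

/-- Mode-2 product of a third-order tensor with a matrix. -/
def tmul2 {n1 n2 n3 m : ℕ} (T : Fin n1 → Fin n2 → Fin n3 → ℝ)
    (M : Matrix (Fin n2) (Fin m) ℝ) : Fin n1 → Fin m → Fin n3 → ℝ :=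
  fun i l k => ∑ j, T i j k * M j l

/-- Mode-3 product of a third-order tensor with a matrix. -/
def tmul3 {n1 n2 n3 m : ℕ} (T : Fin n1 → Fin n2 → Fin n3 → ℝ)
    (M : Matrix (Fin n3) (Fin m) ℝ) : Fin n1 → Fin n2 → Fin m → ℝ :=
  fun i j l => ∑ k, T i j k * M k l

/-!
Since `exp (-s • B)` has derivative `-(B * exp (-s • B))`, the product rule applied to each of
the three mode products produces, for every mode `i`, the term `-(H ×ᵢ Bᵢ) ×ᵢ exp (-s • Bᵢ)`
(products in distinct modes commute, consecutive products in one mode compose as matrices).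
It cancels the contribution of `H ×ᵢ Bᵢ` in `H'`, so only the `H₀` term survives.
-/

theorem hasDerivAt_exp_neg_smul {𝕂 𝔸 : Type*} [RCLike 𝕂] [NormedRing 𝔸] [NormedAlgebra 𝕂 𝔸]
    [CompleteSpace 𝔸] (b : 𝔸) (t : 𝕂) :
    HasDerivAt (fun s : 𝕂 => NormedSpace.exp (-s • b)) (-(b * NormedSpace.exp (-t • b))) t := by
  simpa only [neg_smul, smul_neg, neg_mul] using hasDerivAt_exp_smul_const' (-b) t

theorem Matrix.hasDerivAt_exp_neg_smul_apply {n : Type*} [Fintype n] [DecidableEq n]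
    (B : Matrix n n ℝ) (t : ℝ) (i j : n) :
    HasDerivAt (fun s : ℝ => NormedSpace.exp (-s • B) i j)
      ((-(B * NormedSpace.exp (-t • B))) i j) t := by
  -- Any Banach-algebra norm will do: entries are continuous linear in finite dimension.
  let := Matrix.linftyOpNormedRing (n := n) (α := ℝ)
  let := Matrix.linftyOpNormedAlgebra (R := ℝ) (n := n) (α := ℝ)
  exact (Matrix.entryLinearMap ℝ ℝ i j).toContinuousLinearMap.hasFDerivAt.comp_hasDerivAt t
    (hasDerivAt_exp_neg_smul B t)

section ModeProducts

variable {n1 n2 n3 m p : ℕ}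

theorem add_tmul1 (T S : Fin n1 → Fin n2 → Fin n3 → ℝ) (M : Matrix (Fin n1) (Fin m) ℝ) :
    tmul1 (T + S) M = tmul1 T M + tmul1 S M := by
  funext l j k
  simp [tmul1, add_mul, Finset.sum_add_distrib]

theorem add_tmul2 (T S : Fin n1 → Fin n2 → Fin n3 → ℝ) (M : Matrix (Fin n2) (Fin m) ℝ) :
    tmul2 (T + S) M = tmul2 T M + tmul2 S M := by
  funext i l k
  simp [tmul2, add_mul, Finset.sum_add_distrib]

theorem add_tmul3 (T S : Fin n1 → Fin n2 → Fin n3 → ℝ) (M : Matrix (Fin n3) (Fin m) ℝ) :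
    tmul3 (T + S) M = tmul3 T M + tmul3 S M := by
  funext i j l
  simp [tmul3, add_mul, Finset.sum_add_distrib]

theorem neg_tmul2 (T : Fin n1 → Fin n2 → Fin n3 → ℝ) (M : Matrix (Fin n2) (Fin m) ℝ) :
    tmul2 (-T) M = -tmul2 T M := by
  funext i l k
  simp [tmul2]

theorem neg_tmul3 (T : Fin n1 → Fin n2 → Fin n3 → ℝ) (M : Matrix (Fin n3) (Fin m) ℝ) :
    tmul3 (-T) M = -tmul3 T M := by
  funext i j l
  simp [tmul3]

theorem tmul1_neg (T : Fin n1 → Fin n2 → Fin n3 → ℝ) (M : Matrix (Fin n1) (Fin m) ℝ) :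
    tmul1 T (-M) = -tmul1 T M := by
  funext l j k
  simp [tmul1]

theorem tmul2_neg (T : Fin n1 → Fin n2 → Fin n3 → ℝ) (M : Matrix (Fin n2) (Fin m) ℝ) :
    tmul2 T (-M) = -tmul2 T M := by
  funext i l k
  simp [tmul2]

theorem tmul3_neg (T : Fin n1 → Fin n2 → Fin n3 → ℝ) (M : Matrix (Fin n3) (Fin m) ℝ) :
    tmul3 T (-M) = -tmul3 T M := by
  funext i j l
  simp [tmul3]

theorem tmul1_tmul1 (T : Fin n1 → Fin n2 → Fin n3 → ℝ) (A : Matrix (Fin n1) (Fin m) ℝ)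
    (B : Matrix (Fin m) (Fin p) ℝ) : tmul1 (tmul1 T A) B = tmul1 T (A * B) := by
  funext l j k
  simp only [tmul1, Matrix.mul_apply, Finset.sum_mul, Finset.mul_sum, mul_assoc]
  exact Finset.sum_comm

theorem tmul2_tmul2 (T : Fin n1 → Fin n2 → Fin n3 → ℝ) (A : Matrix (Fin n2) (Fin m) ℝ)
    (B : Matrix (Fin m) (Fin p) ℝ) : tmul2 (tmul2 T A) B = tmul2 T (A * B) := by
  funext i l k
  simp only [tmul2, Matrix.mul_apply, Finset.sum_mul, Finset.mul_sum, mul_assoc]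
  exact Finset.sum_comm

theorem tmul3_tmul3 (T : Fin n1 → Fin n2 → Fin n3 → ℝ) (A : Matrix (Fin n3) (Fin m) ℝ)
    (B : Matrix (Fin m) (Fin p) ℝ) : tmul3 (tmul3 T A) B = tmul3 T (A * B) := by
  funext i j l
  simp only [tmul3, Matrix.mul_apply, Finset.sum_mul, Finset.mul_sum, mul_assoc]
  exact Finset.sum_comm

theorem tmul1_tmul2_comm (T : Fin n1 → Fin n2 → Fin n3 → ℝ) (A : Matrix (Fin n1) (Fin m) ℝ)
    (B : Matrix (Fin n2) (Fin p) ℝ) : tmul1 (tmul2 T B) A = tmul2 (tmul1 T A) B := by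
  funext l l' k
  simp only [tmul1, tmul2, Finset.sum_mul]
  exact Finset.sum_comm.trans (by simp only [mul_right_comm])

theorem tmul1_tmul3_comm (T : Fin n1 → Fin n2 → Fin n3 → ℝ) (A : Matrix (Fin n1) (Fin m) ℝ)
    (B : Matrix (Fin n3) (Fin p) ℝ) : tmul1 (tmul3 T B) A = tmul3 (tmul1 T A) B := by
  funext l j l'
  simp only [tmul1, tmul3, Finset.sum_mul]
  exact Finset.sum_comm.trans (by simp only [mul_right_comm])

theorem tmul2_tmul3_comm (T : Fin n1 → Fin n2 → Fin n3 → ℝ) (A : Matrix (Fin n2) (Fin m) ℝ)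
    (B : Matrix (Fin n3) (Fin p) ℝ) : tmul2 (tmul3 T B) A = tmul3 (tmul2 T A) B := by
  funext i l l'
  simp only [tmul2, tmul3, Finset.sum_mul]
  exact Finset.sum_comm.trans (by simp only [mul_right_comm])

variable {T : ℝ → Fin n1 → Fin n2 → Fin n3 → ℝ} {T' : Fin n1 → Fin n2 → Fin n3 → ℝ} {t : ℝ}

theorem HasDerivAt.tmul1 {M : ℝ → Matrix (Fin n1) (Fin m) ℝ} {M' : Matrix (Fin n1) (Fin m) ℝ}
    (hT : HasDerivAt T T' t) (hM : ∀ i l, HasDerivAt (fun s => M s i l) (M' i l) t) :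
    HasDerivAt (fun s => tmul1 (T s) (M s)) (tmul1 T' (M t) + tmul1 (T t) M') t := by
  simp only [hasDerivAt_pi] at hT ⊢
  intro l j k
  simpa only [_root_.tmul1, Finset.sum_add_distrib, Pi.add_apply] using
    HasDerivAt.fun_sum fun i _ => (hT i j k).fun_mul (hM i l)

theorem HasDerivAt.tmul2 {M : ℝ → Matrix (Fin n2) (Fin m) ℝ} {M' : Matrix (Fin n2) (Fin m) ℝ}
    (hT : HasDerivAt T T' t) (hM : ∀ j l, HasDerivAt (fun s => M s j l) (M' j l) t) :
    HasDerivAt (fun s => tmul2 (T s) (M s)) (tmul2 T' (M t) + tmul2 (T t) M') t := by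
  simp only [hasDerivAt_pi] at hT ⊢
  intro i l k
  simpa only [_root_.tmul2, Finset.sum_add_distrib, Pi.add_apply] using
    HasDerivAt.fun_sum fun j _ => (hT i j k).fun_mul (hM j l)

theorem HasDerivAt.tmul3 {M : ℝ → Matrix (Fin n3) (Fin m) ℝ} {M' : Matrix (Fin n3) (Fin m) ℝ}
    (hT : HasDerivAt T T' t) (hM : ∀ k l, HasDerivAt (fun s => M s k l) (M' k l) t) :
    HasDerivAt (fun s => tmul3 (T s) (M s)) (tmul3 T' (M t) + tmul3 (T t) M') t := by
  simp only [hasDerivAt_pi] at hT ⊢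
  intro i j l
  simpa only [_root_.tmul3, Finset.sum_add_distrib, Pi.add_apply] using
    HasDerivAt.fun_sum fun k _ => (hT i j k).fun_mul (hM k l)

end ModeProducts

/-- If `H` solves the tensor ODE `H' = H ×₁ B₁ + H ×₂ B₂ + H ×₃ B₃ + H₀`, then the
integrating-factor transform `H*(t) = H(t) ×₁ exp(−tB₁) ×₂ exp(−tB₂) ×₃ exp(−tB₃)`
has derivative `H₀ ×₁ exp(−tB₁) ×₂ exp(−tB₂) ×₃ exp(−tB₃)`. -/
theorem integrating_factor_derivative {N T F : ℕ}
    (H0 : Fin N → Fin T → Fin F → ℝ)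
    (B1 : Matrix (Fin N) (Fin N) ℝ) (B2 : Matrix (Fin T) (Fin T) ℝ)
    (B3 : Matrix (Fin F) (Fin F) ℝ)
    (H : ℝ → (Fin N → Fin T → Fin F → ℝ))
    (hODE : ∀ t : ℝ, HasDerivAt H
      (tmul1 (H t) B1 + tmul2 (H t) B2 + tmul3 (H t) B3 + H0) t) :
    ∀ t : ℝ, HasDerivAt
      (fun s : ℝ => tmul3 (tmul2 (tmul1 (H s) (NormedSpace.exp (-s • B1)))
        (NormedSpace.exp (-s • B2))) (NormedSpace.exp (-s • B3)))
      (tmul3 (tmul2 (tmul1 H0 (NormedSpace.exp (-t • B1)))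
        (NormedSpace.exp (-t • B2))) (NormedSpace.exp (-t • B3))) t := by
  intro t
  have h := (((hODE t).tmul1 (Matrix.hasDerivAt_exp_neg_smul_apply B1 t)).tmul2
    (Matrix.hasDerivAt_exp_neg_smul_apply B2 t)).tmul3 (Matrix.hasDerivAt_exp_neg_smul_apply B3 t)
  convert h using 1
  simp only [add_tmul1, add_tmul2, add_tmul3, neg_tmul2, neg_tmul3, tmul1_neg, tmul2_neg,
    tmul3_neg, tmul1_tmul2_comm, tmul1_tmul3_comm, tmul2_tmul3_comm, tmul1_tmul1, tmul2_tmul2,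
    tmul3_tmul3]
  abel
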